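/- Let Z be a Hausdorff topological space with no isolated points, let f_1,…,f_N be continuous self-maps of Z, and suppose there exists a weakly mixing continuous map g : Z → Z with g ∘ f_i = f_i ∘ g for i = 1,…,N. Then for all nonempty open sets U_0,…,U_N ⊆ Z and V_0,…,V_N ⊆ Z there exist nonempty open sets W_0,…,W_N ⊆ Z such that d-N(W_0; W_1,…,W_N) ⊆ d-N(U_0; U_1,…,U_N) ∩ d-N(V_0; V_1,…,V_N). Consequently, if f_1,…,f_N is disjoint transitive, then the family d-N_f of all subsets of ℕ containing some disjoint return set is a filter. -/

import Mathlib

/-!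
Weak mixing of `g` yields, by Furstenberg's pair reduction, a common hitting time `n` for any
finitely many pairs of nonempty open sets. For `n` common to `(U₀, V₀)` and all `(U i, V i)`,
the sets `W₀ = U₀ ∩ g⁻ⁿ V₀` and `W i = U i ∩ g⁻ⁿ V i` work: if `z ∈ W₀` returns at time `m`,
so does `gⁿ z` with respect to the `V`'s, as `g` commutes with every `f i`.

Return sets are infinite: in a Hausdorff space without isolated points any finite set of
times can be excluded by shrinking the open sets, and disjoint transitivity keeps the return
set of the shrunken sets nonempty.
-/

/-- The disjoint return set `d-N(U₀; U₁,…,U_N)` of the tuple `f`. -/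
def dRet {Z : Type*} {N : ℕ} (f : Fin N → Z → Z) (U0 : Set Z) (U : Fin N → Set Z) :
    Set ℕ :=
  {m | ∃ z ∈ U0, ∀ i, (f i)^[m] z ∈ U i}

/-- The tuple `f 1,…,f N` is disjoint transitive: every disjoint return set is nonempty. -/
def dTrans {Z : Type*} [TopologicalSpace Z] {N : ℕ} (f : Fin N → Z → Z) : Prop :=
  ∀ (U0 : Set Z) (U : Fin N → Set Z), IsOpen U0 → U0.Nonempty →
    (∀ i, IsOpen (U i)) → (∀ i, (U i).Nonempty) → (dRet f U0 U).Nonempty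

/-- The `r`-fold product map `g × ⋯ × g` on `Z^r`. -/
def prodPow {Z : Type*} (r : ℕ) (g : Z → Z) : (Fin r → Z) → (Fin r → Z) :=
  fun x j => g (x j)

/-- The tuple `f 1,…,f N` is disjoint weakly mixing of order `r`: the `N`-tuple of the
`r`-fold products `f i × ⋯ × f i` on `Z^r` is disjoint transitive. -/
def dWM {Z : Type*} [TopologicalSpace Z] {N : ℕ} (r : ℕ) (f : Fin N → Z → Z) : Prop :=
  dTrans (fun i => prodPow r (f i))

/-- The family `d-N_f` of all subsets of `ℕ` containing some disjoint return set. -/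
def dSupersets {Z : Type*} [TopologicalSpace Z] {N : ℕ} (f : Fin N → Z → Z) : Set (Set ℕ) :=
  {B | ∃ (U0 : Set Z) (U : Fin N → Set Z),
    IsOpen U0 ∧ U0.Nonempty ∧ (∀ i, IsOpen (U i)) ∧ (∀ i, (U i).Nonempty) ∧
    dRet f U0 U ⊆ B}

/-- `g` is weakly mixing: `g × g` is topologically transitive on `Z × Z`. -/
def wMix {Z : Type*} [TopologicalSpace Z] (g : Z → Z) : Prop :=
  ∀ W1 W2 : Set (Z × Z), IsOpen W1 → W1.Nonempty → IsOpen W2 → W2.Nonempty →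
    ∃ n : ℕ, ((Prod.map g g)^[n] '' W1 ∩ W2).Nonempty

section ReturnSets

variable {Z : Type*} {N : ℕ} {f : Fin N → Z → Z} {g : Z → Z}

lemma dRet_mono {U0 V0 : Set Z} {U V : Fin N → Set Z} (h0 : U0 ⊆ V0) (h : ∀ i, U i ⊆ V i) :
    dRet f U0 U ⊆ dRet f V0 V := by
  rintro m ⟨z, hz, hzU⟩
  exact ⟨z, h0 hz, fun i => h i (hzU i)⟩

lemma dRet_inter_preimage_subset {h : Z → Z} (hh : ∀ i, Function.Commute h (f i))
    (U0 V0 : Set Z) (U V : Fin N → Set Z) :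
    dRet f (U0 ∩ h ⁻¹' V0) (fun i => U i ∩ h ⁻¹' V i) ⊆ dRet f U0 U ∩ dRet f V0 V := by
  rintro m ⟨z, ⟨hzU0, hzV0⟩, hz⟩
  refine ⟨⟨z, hzU0, fun i => (hz i).1⟩, ⟨h z, hzV0, fun i => ?_⟩⟩
  rw [← ((hh i).iterate_right m).eq z]
  exact (hz i).2

/-- `N_g(A, B)`, encoded as the disjoint return set of the one-map tuple `g`. -/
abbrev hitTimes (g : Z → Z) (A B : Set Z) : Set ℕ :=
  dRet (fun _ : Fin 1 => g) A fun _ => B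

lemma mem_hitTimes {A B : Set Z} {n : ℕ} : n ∈ hitTimes g A B ↔ ∃ x ∈ A, g^[n] x ∈ B := by
  simp [dRet]

end ReturnSets

section WeakMixing

variable {Z : Type*} [TopologicalSpace Z] {g : Z → Z}

lemma wMix.exists_mem_hitTimes_inter (hgwm : wMix g) {A B C D : Set Z}
    (hA : IsOpen A) (hA' : A.Nonempty) (hB : IsOpen B) (hB' : B.Nonempty)
    (hC : IsOpen C) (hC' : C.Nonempty) (hD : IsOpen D) (hD' : D.Nonempty) :
    ∃ n, n ∈ hitTimes g A B ∩ hitTimes g C D := by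
  obtain ⟨n, _, ⟨p, hp, rfl⟩, hpBD⟩ :=
    hgwm (A ×ˢ C) (B ×ˢ D) (hA.prod hC) (hA'.prod hC') (hB.prod hD) (hB'.prod hD')
  rw [Prod.map_iterate] at hpBD
  exact ⟨n, mem_hitTimes.2 ⟨p.1, hp.1, hpBD.1⟩, mem_hitTimes.2 ⟨p.2, hp.2, hpBD.2⟩⟩

/-- Furstenberg's pair reduction: `N_g(A, B) ∩ N_g(C, D)` contains a set of hitting times of
nonempty open sets, namely `N_g(A ∩ g⁻ⁿ C, B ∩ g⁻ⁿ D)` for a common hitting time `n`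
of `(A, C)` and `(B, D)`. -/
lemma wMix.exists_hitTimes_subset_inter (hg : Continuous g) (hgwm : wMix g) {A B C D : Set Z}
    (hA : IsOpen A) (hA' : A.Nonempty) (hB : IsOpen B) (hB' : B.Nonempty)
    (hC : IsOpen C) (hC' : C.Nonempty) (hD : IsOpen D) (hD' : D.Nonempty) :
    ∃ A' B', IsOpen A' ∧ A'.Nonempty ∧ IsOpen B' ∧ B'.Nonempty ∧
      hitTimes g A' B' ⊆ hitTimes g A B ∩ hitTimes g C D := by
  obtain ⟨n, hAC, hBD⟩ := hgwm.exists_mem_hitTimes_inter hA hA' hC hC' hB hB' hD hD'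
  refine ⟨A ∩ g^[n] ⁻¹' C, B ∩ g^[n] ⁻¹' D, hA.inter (hC.preimage (hg.iterate n)),
    mem_hitTimes.1 hAC, hB.inter (hD.preimage (hg.iterate n)), mem_hitTimes.1 hBD, ?_⟩
  exact dRet_inter_preimage_subset (fun _ => (Function.Commute.refl g).iterate_left n) A C _ _

lemma wMix.exists_hitTimes_subset_biInter (hg : Continuous g) (hgwm : wMix g) {ι : Type*}
    (s : Finset ι) {A B : ι → Set Z} (hA : ∀ j, IsOpen (A j)) (hA' : ∀ j, (A j).Nonempty)
    (hB : ∀ j, IsOpen (B j)) (hB' : ∀ j, (B j).Nonempty) {A0 B0 : Set Z}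
    (hA0 : IsOpen A0) (hA0' : A0.Nonempty) (hB0 : IsOpen B0) (hB0' : B0.Nonempty) :
    ∃ A' B', IsOpen A' ∧ A'.Nonempty ∧ IsOpen B' ∧ B'.Nonempty ∧
      hitTimes g A' B' ⊆ hitTimes g A0 B0 ∩ ⋂ j ∈ s, hitTimes g (A j) (B j) := by
  classical
  induction s using Finset.induction with
  | empty => exact ⟨A0, B0, hA0, hA0', hB0, hB0', by simp⟩
  | insert j s _ ih =>
    obtain ⟨A₁, B₁, hA₁, hA₁', hB₁, hB₁', hsub₁⟩ := ih
    obtain ⟨A₂, B₂, hA₂, hA₂', hB₂, hB₂', hsub₂⟩ :=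
      hgwm.exists_hitTimes_subset_inter hg hA₁ hA₁' hB₁ hB₁' (hA j) (hA' j) (hB j) (hB' j)
    refine ⟨A₂, B₂, hA₂, hA₂', hB₂, hB₂', fun n hn => ?_⟩
    obtain ⟨hn₁, hnj⟩ := hsub₂ hn
    obtain ⟨hn0, hns⟩ := hsub₁ hn₁
    simp only [Finset.set_biInter_insert]
    exact ⟨hn0, hnj, hns⟩

lemma wMix.exists_dRet_subset_inter (hg : Continuous g) (hgwm : wMix g) {N : ℕ}
    {f : Fin N → Z → Z} (hcomm : ∀ i, Function.Commute g (f i)) (U0 V0 : Set Z)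
    (U V : Fin N → Set Z) (hU0 : IsOpen U0) (hU0' : U0.Nonempty) (hV0 : IsOpen V0)
    (hV0' : V0.Nonempty) (hU : ∀ i, IsOpen (U i)) (hU' : ∀ i, (U i).Nonempty)
    (hV : ∀ i, IsOpen (V i)) (hV' : ∀ i, (V i).Nonempty) :
    ∃ (W0 : Set Z) (W : Fin N → Set Z),
      IsOpen W0 ∧ W0.Nonempty ∧ (∀ i, IsOpen (W i)) ∧ (∀ i, (W i).Nonempty) ∧
      dRet f W0 W ⊆ dRet f U0 U ∩ dRet f V0 V := by
  obtain ⟨A, B, hA, hA', hB, hB', hsub⟩ :=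
    hgwm.exists_hitTimes_subset_biInter hg Finset.univ hU hU' hV hV' hU0 hU0' hV0 hV0'
  obtain ⟨n, hn, -⟩ := hgwm.exists_mem_hitTimes_inter hA hA' hB hB' hA hA' hB hB'
  obtain ⟨hn0, hnU⟩ := hsub hn
  simp only [Finset.mem_univ, Set.iInter_true, Set.mem_iInter] at hnU
  exact ⟨U0 ∩ g^[n] ⁻¹' V0, fun i => U i ∩ g^[n] ⁻¹' V i,
    hU0.inter (hV0.preimage (hg.iterate n)), mem_hitTimes.1 hn0,
    fun i => (hU i).inter ((hV i).preimage (hg.iterate n)), fun i => mem_hitTimes.1 (hnU i),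
    dRet_inter_preimage_subset (fun i => (hcomm i).iterate_left n) U0 V0 U V⟩

end WeakMixing

section NoIsolatedPoints

variable {Z : Type*} [TopologicalSpace Z]

lemma IsOpen.infinite_of_not_isOpen_singleton [T1Space Z]
    (hiso : ∀ z : Z, ¬ IsOpen ({z} : Set Z)) {U : Set Z} (hU : IsOpen U) (hU' : U.Nonempty) :
    U.Infinite := by
  obtain ⟨x, hx⟩ := hU'
  have : (nhdsWithin x {x}ᶜ).NeBot :=
    ⟨fun h => hiso x ((isOpen_singleton_iff_punctured_nhds x).2 h)⟩
  exact infinite_of_mem_nhds x (hU.mem_nhds hx)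

/-- Given a point `a ∈ U₀`, the finitely many points `(f i₀)^[m] a`, `m ∈ F`, can be separated
from some point `b ∈ U i₀`; shrinking `U₀` around `a` and `U i₀` around `b` accordingly kills
all return times in `F`. -/
lemma exists_dRet_disjoint [T2Space Z] (hiso : ∀ z : Z, ¬ IsOpen ({z} : Set Z)) {N : ℕ}
    {f : Fin N → Z → Z} (hf : ∀ i, Continuous (f i)) (i0 : Fin N) (F : Finset ℕ)
    {U0 : Set Z} {U : Fin N → Set Z} (hU0 : IsOpen U0) (hU0' : U0.Nonempty)
    (hU : ∀ i, IsOpen (U i)) (hU' : ∀ i, (U i).Nonempty) :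
    ∃ (W0 : Set Z) (W : Fin N → Set Z),
      IsOpen W0 ∧ W0.Nonempty ∧ (∀ i, IsOpen (W i)) ∧ (∀ i, (W i).Nonempty) ∧
      W0 ⊆ U0 ∧ (∀ i, W i ⊆ U i) ∧ Disjoint (dRet f W0 W) F := by
  obtain ⟨a, ha⟩ := hU0'
  set P := (fun m => (f i0)^[m] a) '' F
  have hP : P.Finite := F.finite_toSet.image _
  obtain ⟨b, hbU, hbP⟩ :=
    ((hU i0).infinite_of_not_isOpen_singleton hiso (hU' i0)).sdiff hP |>.nonempty
  obtain ⟨O, O', hO, hO', hbO, hPO', hOO'⟩ := SeparatedNhds.of_isCompact_isCompact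
    isCompact_singleton hP.isCompact (Set.disjoint_singleton_left.2 hbP)
  refine ⟨U0 ∩ ⋂ m ∈ F, (f i0)^[m] ⁻¹' O', Function.update U i0 (U i0 ∩ O),
    hU0.inter (isOpen_biInter_finset fun m _ => hO'.preimage ((hf i0).iterate m)),
    ⟨a, ha, Set.mem_iInter₂.2 fun m hm => hPO' ⟨m, hm, rfl⟩⟩, ?_, ?_, Set.inter_subset_left,
    ?_, ?_⟩
  · exact (Function.forall_update_iff U fun _ W => IsOpen W).2
      ⟨(hU i0).inter hO, fun i _ => hU i⟩
  · exact (Function.forall_update_iff U fun _ W => W.Nonempty).2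
      ⟨⟨b, hbU, hbO rfl⟩, fun i _ => hU' i⟩
  · exact (Function.forall_update_iff U fun i W => W ⊆ U i).2
      ⟨Set.inter_subset_left, fun i _ => subset_rfl⟩
  · refine Set.disjoint_left.2 fun m ⟨z, ⟨_, hzO'⟩, hz⟩ hmF => ?_
    have hzO : (f i0)^[m] z ∈ U i0 ∩ O := by simpa using hz i0
    exact Set.disjoint_left.1 hOO' hzO.2 (Set.mem_iInter₂.1 hzO' m hmF)

lemma dTrans.dRet_infinite [T2Space Z] (hiso : ∀ z : Z, ¬ IsOpen ({z} : Set Z)) {N : ℕ}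
    {f : Fin N → Z → Z} (hf : ∀ i, Continuous (f i)) (htr : dTrans f) {U0 : Set Z}
    {U : Fin N → Set Z} (hU0 : IsOpen U0) (hU0' : U0.Nonempty) (hU : ∀ i, IsOpen (U i))
    (hU' : ∀ i, (U i).Nonempty) : (dRet f U0 U).Infinite := by
  rcases isEmpty_or_nonempty (Fin N) with hN | ⟨⟨i0⟩⟩
  · obtain ⟨a, ha⟩ := hU0'
    exact Set.infinite_univ.mono fun m _ => ⟨a, ha, isEmptyElim⟩
  · intro hfin
    obtain ⟨W0, W, hW0, hW0', hW, hW', hW0U0, hWU, hdisj⟩ :=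
      exists_dRet_disjoint hiso hf i0 hfin.toFinset hU0 hU0' hU hU'
    obtain ⟨m, hm⟩ := htr W0 W hW0 hW0' hW hW'
    exact Set.disjoint_left.1 hdisj hm (hfin.mem_toFinset.2 (dRet_mono hW0U0 hWU hm))

end NoIsolatedPoints

/-- Let `Z` be Hausdorff with no isolated points, `f 1,…,f N`
continuous self-maps commuting with a weakly mixing continuous map `g`.  Then any two
disjoint return sets of `f` contain a common disjoint return set; consequently, if
`f 1,…,f N` is disjoint transitive, then the family of all supersets of disjoint
return sets is a filter. -/
theorem stmt_6 {Z : Type*} [TopologicalSpace Z] [T2Space Z]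
    (hiso : ∀ z : Z, ¬ IsOpen ({z} : Set Z))
    {N : ℕ} (f : Fin N → Z → Z) (hf : ∀ i, Continuous (f i))
    (g : Z → Z) (hg : Continuous g) (hgwm : wMix g)
    (hcomm : ∀ i, g ∘ f i = f i ∘ g) :
    (∀ (U0 V0 : Set Z) (U V : Fin N → Set Z),
      IsOpen U0 → U0.Nonempty → IsOpen V0 → V0.Nonempty →
      (∀ i, IsOpen (U i)) → (∀ i, (U i).Nonempty) →
      (∀ i, IsOpen (V i)) → (∀ i, (V i).Nonempty) →
      ∃ (W0 : Set Z) (W : Fin N → Set Z),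
        IsOpen W0 ∧ W0.Nonempty ∧ (∀ i, IsOpen (W i)) ∧ (∀ i, (W i).Nonempty) ∧
        dRet f W0 W ⊆ dRet f U0 U ∩ dRet f V0 V)
    ∧ (dTrans f →
      ((∀ B ∈ dSupersets f, B.Infinite) ∧
        (∀ B C : Set ℕ, B ∈ dSupersets f → B ⊆ C → C ∈ dSupersets f) ∧
        (∀ B C : Set ℕ, B ∈ dSupersets f → C ∈ dSupersets f → B ∩ C ∈ dSupersets f))) := by
  have hsub := hgwm.exists_dRet_subset_inter hg fun i => Function.semiconj_iff_comp_eq.2 (hcomm i)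
  refine ⟨hsub, fun htr => ⟨?_, ?_, ?_⟩⟩
  · rintro B ⟨U0, U, hU0, hU0', hU, hU', hB⟩
    exact (htr.dRet_infinite hiso hf hU0 hU0' hU hU').mono hB
  · rintro B C ⟨U0, U, hU0, hU0', hU, hU', hB⟩ hBC
    exact ⟨U0, U, hU0, hU0', hU, hU', hB.trans hBC⟩
  · rintro B C ⟨U0, U, hU0, hU0', hU, hU', hB⟩ ⟨V0, V, hV0, hV0', hV, hV', hC⟩
    obtain ⟨W0, W, hW0, hW0', hW, hW', hWUV⟩ := hsub U0 V0 U V hU0 hU0' hV0 hV0' hU hU' hV hV'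
    exact ⟨W0, W, hW0, hW0', hW, hW', hWUV.trans (Set.inter_subset_inter hB hC)⟩
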